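/- arXiv:2504.00635 — 3 statements merged into one kernel-verified Lean document; each statement's English description precedes it below -/
import Mathlib

section
/- Let a < b be positive integers and let x ∈ [a,b]. Writing [c,d]_o (resp. [c,d]_e) for the set of odd (resp. even) integers in the integer interval [c,d], we have min( |[a,x-1]_o| + |[x+1,b]_e| , |[a,x-1]_e| + |[x+1,b]_o| ) ≥ ⌈(b-a-1)/2⌉. -/
lemma card_odd_Icc (m : ℕ) : ∀ n : ℕ,
    ((Finset.Icc m n).filter (fun z => Odd z)).card = (n + 1) / 2 - m / 2 := by
  intro n
  induction n with
  | zero =>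
    rcases Nat.eq_zero_or_pos m with hm | hm
    · subst hm; decide
    · rw [Finset.Icc_eq_empty (by omega)]; simp only [Finset.filter_empty, Finset.card_empty]; omega
  | succ n ih =>
    rcases le_or_gt m (n + 1) with hm | hm
    · rw [← Finset.insert_Icc_right_eq_Icc_add_one hm, Finset.filter_insert]
      by_cases h : Odd (n + 1)
      · rw [if_pos h, Finset.card_insert_of_notMem (by simp)]
        rw [ih]
        rw [Nat.odd_iff] at h
        omega
      · rw [if_neg h, ih]
        rw [Nat.odd_iff] at h
        omega
    · rw [Finset.Icc_eq_empty (by omega)]; simp only [Finset.filter_empty, Finset.card_empty]; omega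

lemma card_even_Icc (m : ℕ) (hm : 0 < m) : ∀ n : ℕ,
    ((Finset.Icc m n).filter (fun z => Even z)).card = n / 2 + 1 - (m + 1) / 2 := by
  intro n
  induction n with
  | zero =>
    rw [Finset.Icc_eq_empty (by omega)]; simp only [Finset.filter_empty, Finset.card_empty]; omega
  | succ n ih =>
    rcases le_or_gt m (n + 1) with h1 | h1
    · rw [← Finset.insert_Icc_right_eq_Icc_add_one h1, Finset.filter_insert]
      by_cases h : Even (n + 1)
      · rw [if_pos h, Finset.card_insert_of_notMem (by simp)]
        rw [ih]
        rw [Nat.even_iff] at h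
        omega
      · rw [if_neg h, ih]
        rw [Nat.even_iff] at h
        omega
    · rw [Finset.Icc_eq_empty (by omega)]; simp only [Finset.filter_empty, Finset.card_empty]; omega

/-- For positive integers `a < b` and `x ∈ [a,b]`,
`min(|[a,x-1]_o| + |[x+1,b]_e|, |[a,x-1]_e| + |[x+1,b]_o|) ≥ ⌈(b-a-1)/2⌉`. -/
theorem cutting_min_bound (a b x : ℕ) (ha : 0 < a) (hab : a < b)
    (hx : x ∈ Finset.Icc a b) :
    (b - a - 1 + 1) / 2 ≤
      min (((Finset.Icc a (x - 1)).filter (fun z => Odd z)).card +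
             ((Finset.Icc (x + 1) b).filter (fun z => Even z)).card)
          (((Finset.Icc a (x - 1)).filter (fun z => Even z)).card +
             ((Finset.Icc (x + 1) b).filter (fun z => Odd z)).card) := by
  simp only [Finset.mem_Icc] at hx
  rw [card_odd_Icc, card_even_Icc a ha, card_odd_Icc, card_even_Icc (x+1) (by omega),
    le_min_iff]
  omega
end

section
/- If (a_1,...,a_m) is a tuple of integers with each a_i ≥ 2, exactly s of the a_i equal to 2 (with 0 ≤ s ≤ m-1), and a_1 + ... + a_m = N, then ∏_{i=1}^m (a_i!) ≤ 2^s · 6^{m-s-1} · (N - 2s - 3(m-s-1))!. -/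
lemma key_fact (q : ℕ) (hq : 3 ≤ q) :
    ∀ r, 3 ≤ r → r.factorial * q.factorial ≤ 6 * (r + q - 3).factorial := by
  intro r hr
  induction r, hr using Nat.le_induction with
  | base =>
      have : 3 + q - 3 = q := by omega
      simp [this, Nat.factorial]
  | succ n hn ih =>
      have h1 : n + 1 + q - 3 = (n + q - 3) + 1 := by omega
      have h2 : (n + 1).factorial = (n + 1) * n.factorial := rfl
      calc (n + 1).factorial * q.factorial
          = (n + 1) * (n.factorial * q.factorial) := by rw [h2]; ring
        _ ≤ (n + 1) * (6 * (n + q - 3).factorial) :=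
            Nat.mul_le_mul_left _ ih
        _ = 6 * ((n + 1) * (n + q - 3).factorial) := by ring
        _ ≤ 6 * ((n + q - 3 + 1) * (n + q - 3).factorial) := by
            apply Nat.mul_le_mul_left
            apply Nat.mul_le_mul_right
            omega
        _ = 6 * (n + 1 + q - 3).factorial := by
            rw [h1, Nat.factorial_succ]

lemma prod_factorial_ge3 {ι : Type*} [DecidableEq ι] (t : Finset ι) (a : ι → ℕ)
    (ha : ∀ i ∈ t, 3 ≤ a i) :
    ∏ i ∈ t, (a i).factorial ≤
      6 ^ (t.card - 1) * ((∑ i ∈ t, a i) - 3 * (t.card - 1)).factorial := by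
  induction t using Finset.induction_on with
  | empty => simp
  | @insert x t hx ih =>
      rcases t.eq_empty_or_nonempty with rfl | hne
      · simp
      · have hax : 3 ≤ a x := ha x (Finset.mem_insert_self x t)
        have ha' : ∀ i ∈ t, 3 ≤ a i := fun i hi => ha i (Finset.mem_insert_of_mem hi)
        have hcard : 1 ≤ t.card := Finset.card_pos.mpr hne
        have hsum3 : 3 * t.card ≤ ∑ i ∈ t, a i := by
          calc 3 * t.card = ∑ _i ∈ t, 3 := by rw [Finset.sum_const]; ring
            _ ≤ ∑ i ∈ t, a i := Finset.sum_le_sum ha'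
        set S := ∑ i ∈ t, a i with hS
        set k := t.card with hk
        have hq : 3 ≤ S - 3 * (k - 1) := by omega
        rw [Finset.prod_insert hx, Finset.sum_insert hx,
          Finset.card_insert_of_notMem hx]
        have h1 : t.card + 1 - 1 = k := by omega
        rw [h1]
        calc (a x).factorial * ∏ i ∈ t, (a i).factorial
            ≤ (a x).factorial * (6 ^ (k - 1) * (S - 3 * (k - 1)).factorial) :=
              Nat.mul_le_mul_left _ (ih ha')
          _ = 6 ^ (k - 1) * ((a x).factorial * (S - 3 * (k - 1)).factorial) := by ring
          _ ≤ 6 ^ (k - 1) * (6 * (a x + (S - 3 * (k - 1)) - 3).factorial) :=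
              Nat.mul_le_mul_left _ (key_fact _ hq _ hax)
          _ = 6 ^ k * (a x + S - 3 * (k - 1) - 3).factorial := by
              have e1 : a x + (S - 3 * (k - 1)) - 3 = a x + S - 3 * (k - 1) - 3 := by omega
              have e2 : 6 ^ (k - 1) * 6 = 6 ^ k := by
                rw [← pow_succ]; congr 1; omega
              rw [e1, ← mul_assoc, e2]
          _ = 6 ^ k * (a x + S - 3 * k).factorial := by
              congr 2
              omega

/-- If `(a_1,…,a_m)` is a tuple of integers with each `a_i ≥ 2`, exactly `s` of the
`a_i` equal to `2` (with `0 ≤ s ≤ m-1`), and `a_1 + ⋯ + a_m = N`, then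
`∏ (a_i!) ≤ 2^s · 6^{m-s-1} · (N - 2s - 3(m-s-1))!`. -/
theorem prod_factorial_bound (m N s : ℕ) (a : Fin m → ℕ)
    (ha : ∀ i, 2 ≤ a i) (hsum : ∑ i, a i = N)
    (hcount : (Finset.univ.filter (fun i => a i = 2)).card = s)
    (hs : s ≤ m - 1) :
    ∏ i, (a i).factorial ≤
      2 ^ s * 6 ^ (m - s - 1) * (N - 2 * s - 3 * (m - s - 1)).factorial := by
  classical
  set t := Finset.univ.filter (fun i => a i = 2) with ht
  set tc := Finset.univ.filter (fun i => ¬ a i = 2) with htc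
  have hsplit : ∏ i, (a i).factorial =
      (∏ i ∈ t, (a i).factorial) * ∏ i ∈ tc, (a i).factorial :=
    (Finset.prod_filter_mul_prod_filter_not Finset.univ _ _).symm
  have hprodt : ∏ i ∈ t, (a i).factorial = 2 ^ s := by
    rw [← hcount, ← Finset.prod_const]
    apply Finset.prod_congr rfl
    intro i hi
    have : a i = 2 := (Finset.mem_filter.mp hi).2
    rw [this]; rfl
  have hsumsplit : (∑ i ∈ t, a i) + ∑ i ∈ tc, a i = N := by
    rw [← hsum]
    exact Finset.sum_filter_add_sum_filter_not Finset.univ _ _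
  have hsumt : ∑ i ∈ t, a i = 2 * s := by
    rw [← hcount]
    rw [Finset.sum_congr rfl (fun i hi => (Finset.mem_filter.mp hi).2)]
    rw [Finset.sum_const]; ring
  have hcardsplit : t.card + tc.card = m := by
    rw [ht, htc]
    rw [Finset.card_filter_add_card_filter_not]
    simp
  have hcardtc : tc.card = m - s := by omega
  have hsumtc : ∑ i ∈ tc, a i = N - 2 * s := by omega
  have h3 : ∀ i ∈ tc, 3 ≤ a i := by
    intro i hi
    have h2 := (Finset.mem_filter.mp hi).2
    have := ha i
    omega
  have := prod_factorial_ge3 tc a h3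
  rw [hcardtc, hsumtc] at this
  rw [hsplit, hprodt, mul_assoc]
  exact Nat.mul_le_mul_left _ this
end

section
/- Let m ≥ 3 and n > m. Partition [n] into blocks D_0,...,D_{m-1} where D_i is the set of elements of [n] congruent to i mod m. If P is a partition of [n] with k classes such that every class of size ≥ 2 is contained in a single block D_i, and gap(P) ≤ j where j is the number of singleton classes of P, then k > (1 - 1/m)·n. -/
/-- `gap(X) = max X - min X + 1 - |X|` (natural subtraction; for nonempty `X ⊆ ℕ`
this agrees with the integer value). -/
def gap (X : Finset ℕ) : ℕ := X.max.getD 0 + 1 - (X.min.getD 0 + X.card)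

lemma gap_ge (m : ℕ) (C : Finset ℕ) (hC : C.Nonempty)
    (h : ∀ x ∈ C, ∀ y ∈ C, x % m = y % m) :
    (m - 1) * (C.card - 1) ≤ gap C := by
  set a := C.min' hC with ha
  set b := C.max' hC with hb
  have hab : a ≤ b := C.min'_le b (C.max'_mem hC)
  have hcard1 : 1 ≤ C.card := Finset.card_pos.2 hC
  have hmaxmem := C.max'_mem hC
  have hminmem := C.min'_mem hC
  have hdvd : ∀ x ∈ C, m ∣ (x - a) := by
    intro x hx
    have h1 : a % m = x % m := h a hminmem x hx
    have h2 : a ≤ x := C.min'_le x hx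
    exact (Nat.modEq_iff_dvd' h2).1 h1
  have hinj : Set.InjOn (fun x => (x - a) / m) C := by
    intro x hx y hy hxy
    have hx' : a ≤ x := C.min'_le x hx
    have hy' : a ≤ y := C.min'_le y hy
    have ex : m * ((x - a) / m) = x - a := Nat.mul_div_cancel' (hdvd x hx)
    have ey : m * ((y - a) / m) = y - a := Nat.mul_div_cancel' (hdvd y hy)
    simp only at hxy
    have : x - a = y - a := by rw [← ex, ← ey, hxy]
    omega
  have hmap : ∀ x ∈ C, (x - a) / m ∈ Finset.range ((b - a)/m + 1) := by
    intro x hx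
    have : x ≤ b := C.le_max' x hx
    have : (x - a)/m ≤ (b - a)/m := Nat.div_le_div_right (by omega)
    simp [Finset.mem_range]; omega
  have hcard : C.card ≤ (b - a)/m + 1 := by
    have := Finset.card_le_card_of_injOn _ hmap hinj
    simpa using this
  have hkey : m * (C.card - 1) ≤ b - a := by
    have e := Nat.mul_div_cancel' (hdvd b hmaxmem)
    have h2 : m * (C.card - 1) ≤ m * ((b-a)/m) := Nat.mul_le_mul_left m (by omega)
    omega
  have hgapeq : gap C = b + 1 - (a + C.card) := by
    rw [gap, (Finset.coe_max' hC).symm, (Finset.coe_min' hC).symm]; rfl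
  rw [hgapeq]
  obtain ⟨c, hc⟩ : ∃ c, C.card = c + 1 := ⟨C.card - 1, by omega⟩
  rw [hc] at hkey ⊢
  simp only [Nat.add_sub_cancel] at hkey ⊢
  rcases m with _ | m'
  · simp
  · simp only [Nat.succ_sub_one] at *
    have : m' * c + c ≤ b - a := by
      have : (m' + 1) * c = m' * c + c := by ring
      omega
    omega

/-- Let `m ≥ 3`, `n > m`, and partition `[n]` into blocks by residue mod `m`.  If
`P` is a partition of `[n]` with `k` classes, every class of size `≥ 2` lies in a
single block (i.e. all its elements are congruent mod `m`), and
`gap(P) ≤ j` where `j` is the number of singleton classes, then `k > (1 - 1/m)·n`. -/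
theorem block_partition_class_bound (m n k : ℕ) (hm : 3 ≤ m) (hn : m < n)
    (P : Finset (Finset ℕ))
    (hne : ∀ C ∈ P, C.Nonempty)
    (hdisj : ∀ A ∈ P, ∀ B ∈ P, A ≠ B → Disjoint A B)
    (hsub : ∀ C ∈ P, C ⊆ Finset.Icc 1 n)
    (hcov : ∀ x ∈ Finset.Icc 1 n, ∃ C ∈ P, x ∈ C)
    (hk : P.card = k)
    (hblock : ∀ C ∈ P, 2 ≤ C.card → ∃ i < m, ∀ x ∈ C, x % m = i)
    (hgap : ∑ C ∈ P, gap C ≤ (P.filter (fun C => C.card = 1)).card) :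
    ((1 : ℚ) - 1 / m) * n < k := by
  -- n = sum of class sizes
  have hunion : P.biUnion id = Finset.Icc 1 n := by
    ext x
    simp only [Finset.mem_biUnion, id]
    exact ⟨fun ⟨C, hC, hx⟩ => hsub C hC hx, fun hx => hcov x hx⟩
  have hsumcard : ∑ C ∈ P, C.card = n := by
    have := Finset.card_biUnion (fun A hA B hB hAB => hdisj A hA B hB hAB)
    rw [show (P.biUnion fun A => A) = P.biUnion id from rfl, hunion] at this
    simp at this
    omega
  have hkn : k ≤ n := by
    rw [← hk, ← hsumcard, Finset.card_eq_sum_ones]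
    exact Finset.sum_le_sum fun C hC => Finset.card_pos.2 (hne C hC)
  -- lower bound on total gap
  have hlb : ∀ C ∈ P, (m - 1) * (C.card - 1) ≤ gap C := by
    intro C hC
    apply gap_ge m C (hne C hC)
    rcases Nat.lt_or_ge C.card 2 with h1 | h2
    · intro x hx y hy
      have := Finset.card_le_one.mp (by omega) x hx y hy
      rw [this]
    · obtain ⟨i, _, hi⟩ := hblock C hC h2
      intro x hx y hy; rw [hi x hx, hi y hy]
  have hsum1 : ∑ C ∈ P, (C.card - 1) = n - k := by
    have : ∑ C ∈ P, C.card = ∑ C ∈ P, ((C.card - 1) + 1) := by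
      apply Finset.sum_congr rfl
      intro C hC
      have := Finset.card_pos.2 (hne C hC)
      omega
    rw [Finset.sum_add_distrib, Finset.sum_const, smul_eq_mul, mul_one, hk] at this
    omega
  have htot : (m - 1) * (n - k) ≤ ∑ C ∈ P, gap C := by
    calc (m-1) * (n-k) = ∑ C ∈ P, (m-1) * (C.card - 1) := by
          rw [← Finset.mul_sum, hsum1]
      _ ≤ ∑ C ∈ P, gap C := Finset.sum_le_sum hlb
  set j := (P.filter (fun C => C.card = 1)).card with hj
  have hjk : j ≤ k := hk ▸ Finset.card_filter_le _ _
  -- key nat inequality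
  have hfin : (m - 1) * n < m * k := by
    have hdist : (m-1) * k + (m-1) * (n-k) = (m-1) * n := by
      rw [← Nat.mul_add, Nat.add_sub_cancel' hkn]
    have hmk : m * k = (m-1) * k + k := by
      have : m = (m - 1) + 1 := by omega
      nth_rewrite 1 [this]; ring
    by_cases hall : ∀ C ∈ P, C.card = 1
    · have : n = k := by
        rw [← hsumcard, ← hk, Finset.sum_congr rfl hall]; simp
      rw [this]
      exact (Nat.mul_lt_mul_right (by omega)).2 (by omega)
    · push_neg at hall
      obtain ⟨C, hC, hC1⟩ := hall
      have hjlt : j < k := by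
        rw [← hk, hj]
        apply Finset.card_lt_card
        refine ⟨Finset.filter_subset _ _, fun hss => ?_⟩
        have := hss hC
        simp at this
        exact hC1 this.2
      have h1 : (m-1) * (n-k) ≤ j := le_trans htot hgap
      omega
  -- convert to ℚ
  have hm0 : (0:ℚ) < m := by positivity
  have hq : ((m:ℚ) - 1) * n < m * k := by
    have h1 : (((m-1 : ℕ)):ℚ) * n < (m:ℚ) * k := by exact_mod_cast hfin
    rw [Nat.cast_sub (by omega : 1 ≤ m)] at h1
    push_cast at h1
    exact h1
  have h1 : ((1:ℚ) - 1/m) * n = ((m-1)*n)/m := by field_simp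
  rw [h1, div_lt_iff₀ hm0]
  linarith [hq, mul_comm (k:ℚ) (m:ℚ)]
end
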